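/- Let M be a matroid on an n-element set E with rank r(M), and let C ⊆ E be a circuit-hyperplane of M (C is both a circuit and a hyperplane). Let M' be the relaxation of M: the matroid on E whose set of bases is the set of bases of M together with C. Let Q'_M and Q'_{M'} be the polynomials associated to Q'-data for M and M'. Then Q'_M(x,y) = Q'_{M'}(x,y) − x^{n−r(M)−1}·y^{r(M)−1} (note that a circuit-hyperplane forces 1 ≤ r(M) ≤ n−1). -/
import Mathlib


open scoped Pointwise
open Finset

noncomputable section

/-- The standard simplex `Δ = conv{e_i : i ∈ E}` in `ℝ^E`. -/
def stdSimplexSet (α : Type*) [Fintype α] [DecidableEq α] : Set (α → ℝ) :=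
  convexHull ℝ {x : α → ℝ | ∃ i : α, x = Pi.single i (1 : ℝ)}

/-- The number of lattice points (points of `ℤ^E`) in a subset of `ℝ^E`. -/
def latticeCount {α : Type*} (P : Set (α → ℝ)) : ℕ :=
  Set.ncard {q : α → ℤ | (fun i => (q i : ℝ)) ∈ P}

/-- `Qcount P t u` is the number of lattice points of `P + uΔ + t∇`. -/
def Qcount {α : Type*} [Fintype α] [DecidableEq α] (P : Set (α → ℝ)) (t u : ℕ) : ℕ :=
  latticeCount (P + (u : ℝ) • stdSimplexSet α + (t : ℝ) • (-stdSimplexSet α))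

/-- A polymatroid on a finite ground set, given by its rank function. -/
structure PolyMatroid (α : Type*) [Fintype α] [DecidableEq α] where
  rk : Finset α → ℕ
  rk_empty : rk ∅ = 0
  rk_mono : ∀ ⦃S T : Finset α⦄, S ⊆ T → rk S ≤ rk T
  rk_submod : ∀ S T : Finset α, rk (S ∪ T) + rk (S ∩ T) ≤ rk S + rk T

variable {α : Type*} [Fintype α] [DecidableEq α]

/-- A basis of a matroid (an independent spanning set). -/
def PolyMatroid.IsBasis (M : PolyMatroid α) (B : Finset α) : Prop :=
  M.rk B = B.card ∧ M.rk B = M.rk Finset.univ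

/-- The indicator vector of a finite set. -/
def indicatorVec {α : Type*} [DecidableEq α] (B : Finset α) : α → ℝ :=
  fun i => if i ∈ B then 1 else 0

/-- The base polytope of a matroid: the convex hull of indicator vectors of bases. -/
def matroidPolytope (M : PolyMatroid α) : Set (α → ℝ) :=
  convexHull ℝ {x : α → ℝ | ∃ B : Finset α, M.IsBasis B ∧ x = indicatorVec B}

/-- The base polytope of a polymatroid, by its inequality description. -/
def PolyMatroid.polytope (M : PolyMatroid α) : Set (α → ℝ) :=
  {x | (∑ i, x i) = (M.rk Finset.univ : ℝ) ∧
    ∀ S : Finset α, (∑ i ∈ S, x i) ≤ (M.rk S : ℝ)}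

/-- `c : ℕ × ℕ → ℤ` is a `Q'`-datum for the counting function `Q` if it is finitely
supported and interpolates `Q` in the binomial basis. -/
def IsQdatumFun (Q : ℕ → ℕ → ℕ) (c : ℕ × ℕ → ℤ) : Prop :=
  (Function.support c).Finite ∧
    ∀ t u : ℕ, (Q t u : ℤ) = ∑ᶠ p : ℕ × ℕ, c p * (t.choose p.1 : ℤ) * (u.choose p.2 : ℤ)

/-- A `Q'`-datum for the lattice-point counting function of the polytope `P`. -/
def IsQdatum (P : Set (α → ℝ)) (c : ℕ × ℕ → ℤ) : Prop :=
  IsQdatumFun (Qcount P) c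

/-- The polynomial `Q'` associated to a `Q'`-datum, as a function on `ℚ × ℚ`. -/
def Qprime (c : ℕ × ℕ → ℤ) (x y : ℚ) : ℚ :=
  ∑ᶠ p : ℕ × ℕ, (c p : ℚ) * (x - 1) ^ p.1 * (y - 1) ^ p.2

/-- The polynomial `Q'` associated to a `Q'`-datum, as a polynomial in two variables. -/
def QprimePoly (c : ℕ × ℕ → ℤ) : MvPolynomial (Fin 2) ℤ :=
  ∑ᶠ p : ℕ × ℕ,
    MvPolynomial.C (c p) * (MvPolynomial.X 0 - 1) ^ p.1 * (MvPolynomial.X 1 - 1) ^ p.2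

/-- The Tutte polynomial of a matroid, as a function on `ℚ × ℚ`. -/
def TuttePoly (M : PolyMatroid α) (x y : ℚ) : ℚ :=
  ∑ S : Finset α,
    (x - 1) ^ (M.rk Finset.univ - M.rk S) * (y - 1) ^ (S.card - M.rk S)


variable {α : Type*} [Fintype α] [DecidableEq α]

/-- A circuit of a matroid: a minimal dependent set. -/
def PolyMatroid.IsCircuit (M : PolyMatroid α) (C : Finset α) : Prop :=
  M.rk C < C.card ∧ ∀ S : Finset α, S ⊂ C → M.rk S = S.card

/-- A hyperplane of a matroid: a flat of rank `r(M) − 1`. -/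
def PolyMatroid.IsHyperplane (M : PolyMatroid α) (C : Finset α) : Prop :=
  M.rk C + 1 = M.rk Finset.univ ∧ ∀ i ∉ C, M.rk C < M.rk (insert i C)

/-- The base polytope of the relaxation of `M` at `C`: the convex hull of the indicator
vectors of the bases of `M` together with that of `C`. -/
def relaxedPolytope (M : PolyMatroid α) (C : Finset α) : Set (α → ℝ) :=
  convexHull ℝ
    {x : α → ℝ | (∃ B : Finset α, M.IsBasis B ∧ x = indicatorVec B) ∨ x = indicatorVec C}

section Basics

variable {α : Type*} [Fintype α] [DecidableEq α]

namespace PolyMatroid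

variable (M : PolyMatroid α)

lemma rk_insert_le (S : Finset α) (i : α) :
    M.rk (insert i S) ≤ M.rk S + M.rk {i} := by
  have h := M.rk_submod S {i}
  have h2 : S ∪ {i} = insert i S := by
    ext j; simp [Finset.mem_insert, or_comm]
  rw [h2] at h
  omega

lemma rk_le_card (h1 : ∀ i : α, M.rk {i} ≤ 1) (S : Finset α) : M.rk S ≤ S.card := by
  induction S using Finset.induction with
  | empty => simp [M.rk_empty]
  | @insert a s hi ih =>
    have := M.rk_insert_le s a
    have := h1 a
    rw [Finset.card_insert_of_notMem hi]
    omega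

lemma rk_union_le (S T : Finset α) : M.rk (S ∪ T) ≤ M.rk S + M.rk T := by
  have := M.rk_submod S T
  omega

lemma rk_diff (S T : Finset α) (hST : S ⊆ T) : M.rk T ≤ M.rk S + M.rk (T \ S) := by
  have h := M.rk_union_le S (T \ S)
  have h2 : S ∪ (T \ S) = T := Finset.union_sdiff_of_subset hST
  rw [h2] at h; exact h

/-- A subset of an independent set is independent. -/
lemma indep_subset (h1 : ∀ i : α, M.rk {i} ≤ 1) {S T : Finset α}
    (hST : S ⊆ T) (hT : M.rk T = T.card) : M.rk S = S.card := by
  have h := M.rk_diff S T hST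
  have hd := M.rk_le_card h1 (T \ S)
  have hcd : (T \ S).card = T.card - S.card := Finset.card_sdiff_of_subset hST
  have hsc : S.card ≤ T.card := Finset.card_le_card hST
  have hS := M.rk_le_card h1 S
  omega

/-- A basis intersected with any set has cardinality at most the rank. -/
lemma basis_inter_card_le (h1 : ∀ i : α, M.rk {i} ≤ 1) {B : Finset α}
    (hB : M.IsBasis B) (S : Finset α) : (B ∩ S).card ≤ M.rk S := by
  have h := M.indep_subset h1 (Finset.inter_subset_left (s₁ := B) (s₂ := S)) hB.1
  rw [← h]
  exact M.rk_mono (Finset.inter_subset_right)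

end PolyMatroid

end Basics
section Relax

variable {α : Type*} [Fintype α] [DecidableEq α]

namespace PolyMatroid

variable {M : PolyMatroid α} {C : Finset α}

lemma rk_C_eq (hcirc : M.IsCircuit C) : M.rk C + 1 = C.card := by
  obtain ⟨hlt, hpr⟩ := hcirc
  have hne : C.Nonempty := by
    rcases Finset.eq_empty_or_nonempty C with h | h
    · simp [h, M.rk_empty] at hlt
    · exact h
  obtain ⟨c, hc⟩ := hne
  have hsub : C.erase c ⊂ C := Finset.erase_ssubset hc
  have h1 : M.rk (C.erase c) = (C.erase c).card := hpr _ hsub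
  have h2 : (C.erase c).card = C.card - 1 := Finset.card_erase_of_mem hc
  have h3 : M.rk (C.erase c) ≤ M.rk C := M.rk_mono hsub.subset
  have hcpos : 0 < C.card := Finset.card_pos.2 ⟨c, hc⟩
  omega

lemma card_C_eq (hcirc : M.IsCircuit C) (hhyp : M.IsHyperplane C) :
    C.card = M.rk Finset.univ := by
  have := rk_C_eq hcirc
  have := hhyp.1
  omega

lemma C_ne_univ (hhyp : M.IsHyperplane C) : C ≠ Finset.univ := by
  intro h
  have := hhyp.1
  rw [h] at this
  omega

lemma rk_superset_C (hmat : ∀ i : α, M.rk {i} ≤ 1) (hhyp : M.IsHyperplane C)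
    {S : Finset α} (hCS : C ⊆ S) (hne : S ≠ C) :
    M.rk S = M.rk Finset.univ := by
  have hex : ∃ i ∈ S, i ∉ C := by
    by_contra h
    push_neg at h
    exact hne (Finset.Subset.antisymm (fun x hx => h x hx) hCS)
  obtain ⟨i, hiS, hiC⟩ := hex
  have h1 : M.rk C < M.rk (insert i C) := hhyp.2 i hiC
  have h2 : M.rk (insert i C) ≤ M.rk C + M.rk {i} := M.rk_insert_le C i
  have h3 := hmat i
  have h4 : M.rk (insert i C) ≤ M.rk S := by
    apply M.rk_mono
    intro x hx
    rcases Finset.mem_insert.1 hx with h | h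
    · exact h ▸ hiS
    · exact hCS h
  have h5 : M.rk S ≤ M.rk Finset.univ := M.rk_mono (Finset.subset_univ S)
  have := hhyp.1
  omega

lemma inter_C_card_le (hmat : ∀ i : α, M.rk {i} ≤ 1) (hcirc : M.IsCircuit C)
    (hhyp : M.IsHyperplane C) {S : Finset α} (hne : S ≠ C) :
    (C ∩ S).card ≤ M.rk S := by
  by_cases hCS : C ⊆ S
  · have h1 : C ∩ S = C := Finset.inter_eq_left.2 hCS
    rw [h1, card_C_eq hcirc hhyp, rk_superset_C hmat hhyp hCS hne]
  · have hss : C ∩ S ⊂ C := by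
      refine Finset.ssubset_iff_subset_ne.2 ⟨Finset.inter_subset_left, ?_⟩
      intro h
      exact hCS (by rw [← Finset.inter_eq_left]; exact h)
    have h1 : M.rk (C ∩ S) = (C ∩ S).card := hcirc.2 _ hss
    rw [← h1]
    exact M.rk_mono Finset.inter_subset_right

lemma not_C_subset_basis (hmat : ∀ i : α, M.rk {i} ≤ 1) (hcirc : M.IsCircuit C)
    {B : Finset α} (hB : M.IsBasis B) : ¬ C ⊆ B := by
  intro h
  have h1 : M.rk C = C.card := M.indep_subset hmat h hB.1
  have := rk_C_eq hcirc
  omega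

end PolyMatroid

/-- The rank function of the relaxation. -/
def relaxRk (M : PolyMatroid α) (C : Finset α) (S : Finset α) : ℕ :=
  if S = C then M.rk Finset.univ else M.rk S

namespace PolyMatroid

variable {M : PolyMatroid α} {C : Finset α}

lemma relaxRk_le (S : Finset α) : M.rk S ≤ relaxRk M C S := by
  unfold relaxRk
  split
  · next h => exact h ▸ M.rk_mono (Finset.subset_univ C)
  · exact le_rfl

lemma relaxRk_C : relaxRk M C C = M.rk Finset.univ := by simp [relaxRk]

lemma relaxRk_ne (S : Finset α) (h : S ≠ C) : relaxRk M C S = M.rk S := by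
  simp [relaxRk, h]

lemma relaxRk_univ (hhyp : M.IsHyperplane C) :
    relaxRk M C Finset.univ = M.rk Finset.univ := by
  rw [relaxRk_ne _ (Ne.symm (C_ne_univ hhyp))]

lemma relaxRk_submod (hmat : ∀ i : α, M.rk {i} ≤ 1) (hcirc : M.IsCircuit C)
    (hhyp : M.IsHyperplane C) (S T : Finset α) :
    relaxRk M C (S ∪ T) + relaxRk M C (S ∩ T) ≤ relaxRk M C S + relaxRk M C T := by
  have hbase := M.rk_submod S T
  set r := M.rk Finset.univ with hr
  have hrkC : M.rk C + 1 = r := hhyp.1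
  have hler : ∀ W : Finset α, M.rk W ≤ r := fun W => M.rk_mono (Finset.subset_univ W)
  by_cases hS : S = C
  · rw [hS]
    by_cases hT : T = C
    · rw [hT]; simp
    by_cases hCT : C ⊆ T
    · have h1 : C ∪ T = T := Finset.union_eq_right.2 hCT
      have h2 : C ∩ T = C := Finset.inter_eq_left.2 hCT
      rw [h1, h2, relaxRk_C, relaxRk_ne _ hT, rk_superset_C hmat hhyp hCT hT]
    · have h2 : C ∩ T ≠ C := fun h => hCT (by rw [← Finset.inter_eq_left]; exact h)
      rw [relaxRk_ne _ h2, relaxRk_C, relaxRk_ne _ hT]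
      have h3 : M.rk (C ∩ T) = (C ∩ T).card :=
        hcirc.2 _ (Finset.ssubset_iff_subset_ne.2 ⟨Finset.inter_subset_left, h2⟩)
      have h4 : (C ∩ T).card ≤ M.rk T := inter_C_card_le hmat hcirc hhyp hT
      by_cases h5 : C ∪ T = C
      · rw [h5, relaxRk_C]
        omega
      · rw [relaxRk_ne _ h5]
        have h7 : M.rk (C ∪ T) ≤ r := hler _
        omega
  · by_cases hT : T = C
    · rw [hT, Finset.union_comm, Finset.inter_comm]
      by_cases hCS : C ⊆ S
      · have h1 : C ∪ S = S := Finset.union_eq_right.2 hCS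
        have h2 : C ∩ S = C := Finset.inter_eq_left.2 hCS
        rw [h1, h2, relaxRk_C, relaxRk_ne _ hS, rk_superset_C hmat hhyp hCS hS]
      · have h2 : C ∩ S ≠ C := fun h => hCS (by rw [← Finset.inter_eq_left]; exact h)
        rw [relaxRk_ne _ h2, relaxRk_C, relaxRk_ne _ hS]
        have h3 : M.rk (C ∩ S) = (C ∩ S).card :=
          hcirc.2 _ (Finset.ssubset_iff_subset_ne.2 ⟨Finset.inter_subset_left, h2⟩)
        have h4 : (C ∩ S).card ≤ M.rk S := inter_C_card_le hmat hcirc hhyp hS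
        by_cases h5 : C ∪ S = C
        · rw [h5, relaxRk_C]
          omega
        · rw [relaxRk_ne _ h5]
          have h7 : M.rk (C ∪ S) ≤ r := hler _
          omega
    · rw [relaxRk_ne _ hS, relaxRk_ne _ hT]
      by_cases hU : S ∪ T = C
      · have hSC : S ⊂ C := by
          refine Finset.ssubset_iff_subset_ne.2 ⟨?_, hS⟩
          rw [← hU]; exact Finset.subset_union_left
        have hTC : T ⊂ C := by
          refine Finset.ssubset_iff_subset_ne.2 ⟨?_, hT⟩
          rw [← hU]; exact Finset.subset_union_right
        have hIC : S ∩ T ⊂ C :=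
          Finset.ssubset_iff_subset_ne.2
            ⟨Finset.inter_subset_left.trans hSC.subset,
             fun h => hS (Finset.Subset.antisymm hSC.subset (h ▸ Finset.inter_subset_left))⟩
        rw [hU, relaxRk_C, relaxRk_ne _ hIC.ne]
        have h1 : M.rk S = S.card := hcirc.2 _ hSC
        have h2 : M.rk T = T.card := hcirc.2 _ hTC
        have h3 : M.rk (S ∩ T) = (S ∩ T).card := hcirc.2 _ hIC
        have h4 : (S ∪ T).card + (S ∩ T).card = S.card + T.card :=
          Finset.card_union_add_card_inter S T
        have h5 : C.card = r := card_C_eq hcirc hhyp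
        rw [hU] at h4
        omega
      · by_cases hI : S ∩ T = C
        · have hCS : C ⊆ S := hI ▸ Finset.inter_subset_left
          have hCT : C ⊆ T := hI ▸ Finset.inter_subset_right
          have h1 : M.rk S = r := rk_superset_C hmat hhyp hCS hS
          have h2 : M.rk T = r := rk_superset_C hmat hhyp hCT hT
          rw [hI, relaxRk_C, relaxRk_ne _ hU, h1, h2]
          have := hler (S ∪ T)
          omega
        · rw [relaxRk_ne _ hU, relaxRk_ne _ hI]
          exact hbase

lemma relaxRk_mono (hmat : ∀ i : α, M.rk {i} ≤ 1) (hcirc : M.IsCircuit C)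
    (hhyp : M.IsHyperplane C) : ∀ ⦃S T : Finset α⦄, S ⊆ T → relaxRk M C S ≤ relaxRk M C T := by
  intro S T hST
  by_cases hS : S = C
  · rw [hS] at hST ⊢
    by_cases hT : T = C
    · rw [hT]
    · rw [relaxRk_C, relaxRk_ne _ hT, rk_superset_C hmat hhyp hST hT]
  · rw [relaxRk_ne _ hS]
    calc M.rk S ≤ M.rk T := M.rk_mono hST
    _ ≤ relaxRk M C T := relaxRk_le T

lemma C_nonempty (hcirc : M.IsCircuit C) : C.Nonempty := by
  rcases Finset.eq_empty_or_nonempty C with h | h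
  · exfalso; have := hcirc.1; simp [h, M.rk_empty] at this
  · exact h

end PolyMatroid

/-- The relaxed matroid. -/
def relaxMatroid (M : PolyMatroid α) (C : Finset α) (hmat : ∀ i : α, M.rk {i} ≤ 1)
    (hcirc : M.IsCircuit C) (hhyp : M.IsHyperplane C) : PolyMatroid α where
  rk := relaxRk M C
  rk_empty := by
    rw [PolyMatroid.relaxRk_ne _ (by
      intro h
      obtain ⟨c, hc⟩ := PolyMatroid.C_nonempty hcirc
      rw [← h] at hc
      simp at hc)]
    exact M.rk_empty
  rk_mono := PolyMatroid.relaxRk_mono hmat hcirc hhyp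
  rk_submod := PolyMatroid.relaxRk_submod hmat hcirc hhyp

lemma relaxMatroid_single (M : PolyMatroid α) (C : Finset α) (hmat : ∀ i : α, M.rk {i} ≤ 1)
    (hcirc : M.IsCircuit C) (hhyp : M.IsHyperplane C) :
    ∀ i : α, (relaxMatroid M C hmat hcirc hhyp).rk {i} ≤ 1 := by
  intro i
  show relaxRk M C {i} ≤ 1
  by_cases h : ({i} : Finset α) = C
  · rw [h, PolyMatroid.relaxRk_C, ← PolyMatroid.card_C_eq hcirc hhyp, ← h]
    simp
  · rw [PolyMatroid.relaxRk_ne _ h]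
    exact hmat i

lemma relaxMatroid_basis (M : PolyMatroid α) (C : Finset α) (hmat : ∀ i : α, M.rk {i} ≤ 1)
    (hcirc : M.IsCircuit C) (hhyp : M.IsHyperplane C) (B : Finset α) :
    (relaxMatroid M C hmat hcirc hhyp).IsBasis B ↔ M.IsBasis B ∨ B = C := by
  have hru : (relaxMatroid M C hmat hcirc hhyp).rk Finset.univ = M.rk Finset.univ :=
    PolyMatroid.relaxRk_univ hhyp
  constructor
  · rintro ⟨h1, h2⟩
    by_cases hB : B = C
    · exact Or.inr hB
    · left
      rw [show (relaxMatroid M C hmat hcirc hhyp).rk B = relaxRk M C B from rfl,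
        PolyMatroid.relaxRk_ne _ hB] at h1 h2
      rw [hru] at h2
      exact ⟨h1, h2⟩
  · rintro (⟨h1, h2⟩ | hB)
    · have hB : B ≠ C := by
        intro h
        subst h
        have := PolyMatroid.rk_C_eq hcirc
        omega
      constructor
      · show relaxRk M C B = B.card
        rw [PolyMatroid.relaxRk_ne _ hB]; exact h1
      · show relaxRk M C B = relaxRk M C Finset.univ
        rw [PolyMatroid.relaxRk_ne _ hB, PolyMatroid.relaxRk_univ hhyp]
        exact h2
    · constructor
      · show relaxRk M C B = B.card
        rw [hB, PolyMatroid.relaxRk_C, ← PolyMatroid.card_C_eq hcirc hhyp]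
      · show relaxRk M C B = relaxRk M C Finset.univ
        rw [hB, PolyMatroid.relaxRk_C, PolyMatroid.relaxRk_univ hhyp]

lemma relaxMatroid_polytope (M : PolyMatroid α) (C : Finset α) (hmat : ∀ i : α, M.rk {i} ≤ 1)
    (hcirc : M.IsCircuit C) (hhyp : M.IsHyperplane C) :
    matroidPolytope (relaxMatroid M C hmat hcirc hhyp) = relaxedPolytope M C := by
  unfold matroidPolytope relaxedPolytope
  congr 1
  ext x
  simp only [Set.mem_setOf_eq]
  constructor
  · rintro ⟨B, hB, rfl⟩
    rcases (relaxMatroid_basis M C hmat hcirc hhyp B).1 hB with h | h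
    · exact Or.inl ⟨B, h, rfl⟩
    · exact Or.inr (by rw [h])
  · rintro (⟨B, hB, rfl⟩ | rfl)
    · exact ⟨B, (relaxMatroid_basis M C hmat hcirc hhyp B).2 (Or.inl hB), rfl⟩
    · exact ⟨C, (relaxMatroid_basis M C hmat hcirc hhyp C).2 (Or.inr rfl), rfl⟩

end Relax
section EasyBounds

variable {α : Type*} [Fintype α] [DecidableEq α]

lemma sumOn_linear (S : Finset α) :
    IsLinearMap ℝ (fun x : α → ℝ => ∑ i ∈ S, x i) := by
  constructor
  · intro x y; simp [Finset.sum_add_distrib]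
  · intro c x; simp [Finset.mul_sum]

lemma sum_indicatorVec (S B : Finset α) :
    ∑ i ∈ S, indicatorVec B i = ((B ∩ S).card : ℝ) := by
  unfold indicatorVec
  rw [Finset.sum_boole]
  congr 2
  rw [Finset.filter_mem_eq_inter, Finset.inter_comm]

lemma sum_univ_indicatorVec (B : Finset α) :
    ∑ i, indicatorVec B i = (B.card : ℝ) := by
  rw [sum_indicatorVec]
  congr 2
  simp

lemma mem_matroidPolytope_bounds (N : PolyMatroid α) (hmat : ∀ i : α, N.rk {i} ≤ 1)
    {x : α → ℝ} (hx : x ∈ matroidPolytope N) :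
    (∑ i, x i) = (N.rk Finset.univ : ℝ) ∧ ∀ S : Finset α, (∑ i ∈ S, x i) ≤ (N.rk S : ℝ) := by
  have : x ∈ N.polytope := by
    refine convexHull_min ?_ ?_ hx
    · rintro y ⟨B, hB, rfl⟩
      constructor
      · rw [sum_univ_indicatorVec]
        exact_mod_cast hB.1.symm.trans hB.2
      · intro S
        rw [sum_indicatorVec]
        exact_mod_cast N.basis_inter_card_le hmat hB S
    · unfold PolyMatroid.polytope
      have h1 : Convex ℝ {x : α → ℝ | (∑ i, x i) = (N.rk Finset.univ : ℝ)} :=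
        convex_hyperplane (sumOn_linear Finset.univ) _
      have h2 : Convex ℝ {x : α → ℝ | ∀ S : Finset α, (∑ i ∈ S, x i) ≤ (N.rk S : ℝ)} := by
        have : {x : α → ℝ | ∀ S : Finset α, (∑ i ∈ S, x i) ≤ (N.rk S : ℝ)} =
            ⋂ S : Finset α, {x : α → ℝ | (∑ i ∈ S, x i) ≤ (N.rk S : ℝ)} := by
          ext x; simp
        rw [this]
        exact convex_iInter fun S => convex_halfSpace_le (sumOn_linear S) _
      exact h1.inter h2
  exact this

lemma mem_simplex_bounds {x : α → ℝ} (hx : x ∈ stdSimplexSet α) :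
    (∀ i, 0 ≤ x i) ∧ (∑ i, x i) = 1 := by
  have : x ∈ stdSimplex ℝ α := by
    refine convexHull_min ?_ (convex_stdSimplex ℝ α) hx
    rintro y ⟨i, rfl⟩
    constructor
    · intro j
      rw [Pi.single_apply]
      split <;> norm_num
    · simp [Pi.single_apply]
  exact this

lemma mem_smul_simplex_bounds (u : ℕ) {x : α → ℝ} (hx : x ∈ (u : ℝ) • stdSimplexSet α) :
    (∀ i, 0 ≤ x i) ∧ (∑ i, x i) = (u : ℝ) := by
  obtain ⟨y, hy, rfl⟩ := hx
  obtain ⟨h1, h2⟩ := mem_simplex_bounds hy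
  constructor
  · intro i
    exact mul_nonneg (by positivity) (h1 i)
  · simp only [Pi.smul_apply, smul_eq_mul, ← Finset.mul_sum, h2, mul_one]

lemma mem_smul_negsimplex_bounds (t : ℕ) {x : α → ℝ} (hx : x ∈ (t : ℝ) • (-stdSimplexSet α)) :
    (∀ i, x i ≤ 0) ∧ (∑ i, x i) = -(t : ℝ) := by
  obtain ⟨y, hy, rfl⟩ := hx
  rw [Set.mem_neg] at hy
  obtain ⟨h1, h2⟩ := mem_simplex_bounds hy
  constructor
  · intro i
    have := h1 i
    simp only [Pi.neg_apply] at this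
    have : y i ≤ 0 := by linarith
    exact mul_nonpos_of_nonneg_of_nonpos (by positivity) this
  · have h3 : (∑ i, y i) = -1 := by
      have : ∑ i, (-y) i = 1 := h2
      simp only [Pi.neg_apply, Finset.sum_neg_distrib] at this
      linarith
    simp only [Pi.smul_apply, smul_eq_mul, ← Finset.mul_sum, h3]
    ring

/-- The inequality system satisfied by integer points of `P(N) + uΔ + t∇`. -/
def SatSys (N : PolyMatroid α) (t u : ℕ) (z : α → ℤ) : Prop :=
  (∑ i, z i) = (N.rk Finset.univ : ℤ) + u - t ∧
    ∀ S : Finset α, (∑ i ∈ S, z i) ≤ (N.rk S : ℤ) + u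

lemma satSys_of_mem (N : PolyMatroid α) (hmat : ∀ i : α, N.rk {i} ≤ 1) (t u : ℕ)
    (q : α → ℤ)
    (h : (fun i => (q i : ℝ)) ∈
      matroidPolytope N + (u : ℝ) • stdSimplexSet α + (t : ℝ) • (-stdSimplexSet α)) :
    SatSys N t u q := by
  obtain ⟨w, hw, b, hb, hwb⟩ := h
  obtain ⟨p, hp, a, ha, hpa⟩ := hw
  obtain ⟨hp1, hp2⟩ := mem_matroidPolytope_bounds N hmat hp
  obtain ⟨ha1, ha2⟩ := mem_smul_simplex_bounds u ha
  obtain ⟨hb1, hb2⟩ := mem_smul_negsimplex_bounds t hb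
  have hq : ∀ i, (q i : ℝ) = p i + a i + b i := by
    intro i
    have := congrFun hwb i
    have := congrFun hpa i
    simp only [Pi.add_apply] at *
    linarith
  constructor
  · have : (∑ i, (q i : ℝ)) = (N.rk Finset.univ : ℝ) + u - t := by
      rw [Finset.sum_congr rfl fun i _ => hq i]
      rw [Finset.sum_add_distrib, Finset.sum_add_distrib, hp1, ha2, hb2]
      ring
    exact_mod_cast this
  · intro S
    have hS : (∑ i ∈ S, (q i : ℝ)) ≤ (N.rk S : ℝ) + u := by
      rw [Finset.sum_congr rfl fun i _ => hq i]
      rw [Finset.sum_add_distrib, Finset.sum_add_distrib]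
      have h1 : ∑ i ∈ S, a i ≤ (u : ℝ) := by
        rw [← ha2]
        exact Finset.sum_le_sum_of_subset_of_nonneg (Finset.subset_univ S)
          (fun i _ _ => ha1 i)
      have h2 : ∑ i ∈ S, b i ≤ 0 := Finset.sum_nonpos fun i _ => hb1 i
      have h3 := hp2 S
      linarith
    exact_mod_cast hS

end EasyBounds
section HardDirection

variable {α : Type*} [Fintype α] [DecidableEq α]

lemma simplex_nonempty [Nonempty α] : (stdSimplexSet α).Nonempty := by
  obtain ⟨i⟩ := ‹Nonempty α›
  exact ⟨Pi.single i 1, subset_convexHull ℝ _ ⟨i, rfl⟩⟩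

lemma single_mem_simplex (i : α) : Pi.single i (1 : ℝ) ∈ stdSimplexSet α :=
  subset_convexHull ℝ _ ⟨i, rfl⟩

lemma convex_simplex : Convex ℝ (stdSimplexSet α) := convex_convexHull ℝ _

lemma smul_succ_simplex (u : ℕ) :
    ((u + 1 : ℕ) : ℝ) • stdSimplexSet α = (u : ℝ) • stdSimplexSet α + stdSimplexSet α := by
  push_cast
  rw [Convex.add_smul convex_simplex (by positivity : (0:ℝ) ≤ (u:ℝ)) zero_le_one, one_smul]

lemma smul_succ_negsimplex (t : ℕ) :
    ((t + 1 : ℕ) : ℝ) • (-stdSimplexSet α) = (t : ℝ) • (-stdSimplexSet α) + (-stdSimplexSet α) := by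
  push_cast
  rw [Convex.add_smul convex_simplex.neg (by positivity : (0:ℝ) ≤ (t:ℝ)) zero_le_one, one_smul]

lemma sum_zero_smul [Nonempty α] (P : Set (α → ℝ)) :
    P + (0 : ℝ) • stdSimplexSet α + (0 : ℝ) • (-stdSimplexSet α) = P := by
  rw [Set.zero_smul_set simplex_nonempty, Set.zero_smul_set (Set.Nonempty.neg simplex_nonempty),
    add_zero, add_zero]

/-- Key step lemma for the `u` induction. -/
lemma mem_step_u (P : Set (α → ℝ)) (t u : ℕ) {x w : α → ℝ}
    (hx : x ∈ P + (u : ℝ) • stdSimplexSet α + (t : ℝ) • (-stdSimplexSet α))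
    (hw : w ∈ stdSimplexSet α) :
    x + w ∈ P + ((u + 1 : ℕ) : ℝ) • stdSimplexSet α + (t : ℝ) • (-stdSimplexSet α) := by
  rw [smul_succ_simplex]
  have h1 : x + w ∈ (P + (u : ℝ) • stdSimplexSet α + (t : ℝ) • (-stdSimplexSet α))
      + stdSimplexSet α := Set.add_mem_add hx hw
  have h2 : (P + (u : ℝ) • stdSimplexSet α + (t : ℝ) • (-stdSimplexSet α)) + stdSimplexSet α
      = P + ((u : ℝ) • stdSimplexSet α + stdSimplexSet α) + (t : ℝ) • (-stdSimplexSet α) := by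
    rw [add_assoc (P + (u : ℝ) • stdSimplexSet α),
      add_comm ((t : ℝ) • (-stdSimplexSet α)) (stdSimplexSet α),
      ← add_assoc (P + (u : ℝ) • stdSimplexSet α), add_assoc P]
  rwa [h2] at h1

/-- Key step lemma for the `t` induction. -/
lemma mem_step_t (P : Set (α → ℝ)) (t u : ℕ) {x w : α → ℝ}
    (hx : x ∈ P + (u : ℝ) • stdSimplexSet α + (t : ℝ) • (-stdSimplexSet α))
    (hw : w ∈ -stdSimplexSet α) :
    x + w ∈ P + (u : ℝ) • stdSimplexSet α + ((t + 1 : ℕ) : ℝ) • (-stdSimplexSet α) := by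
  rw [smul_succ_negsimplex]
  have h1 : x + w ∈ (P + (u : ℝ) • stdSimplexSet α + (t : ℝ) • (-stdSimplexSet α))
      + (-stdSimplexSet α) := Set.add_mem_add hx hw
  have h2 : (P + (u : ℝ) • stdSimplexSet α + (t : ℝ) • (-stdSimplexSet α)) + (-stdSimplexSet α)
      = P + (u : ℝ) • stdSimplexSet α + ((t : ℝ) • (-stdSimplexSet α) + (-stdSimplexSet α)) :=
    add_assoc _ _ _
  rwa [h2] at h1

section Tight

variable (N : PolyMatroid α) (u : ℕ) (z : α → ℤ)

/-- A tight set for the system. -/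
def TightSet (S : Finset α) : Prop := (∑ i ∈ S, z i) = (N.rk S : ℤ) + u

variable {N u z}

lemma tight_union_inter (hineq : ∀ S : Finset α, (∑ i ∈ S, z i) ≤ (N.rk S : ℤ) + u)
    {S T : Finset α} (hS : TightSet N u z S) (hT : TightSet N u z T) :
    TightSet N u z (S ∪ T) ∧ TightSet N u z (S ∩ T) := by
  have ha := hineq (S ∪ T)
  have hb := hineq (S ∩ T)
  have hsum : (∑ i ∈ S ∪ T, z i) + (∑ i ∈ S ∩ T, z i) = (∑ i ∈ S, z i) + (∑ i ∈ T, z i) :=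
    Finset.sum_union_inter
  have hsub := N.rk_submod S T
  unfold TightSet at *
  omega

lemma tight_inf {𝒮 : Finset (Finset α)} (h𝒮 : 𝒮.Nonempty)
    (hineq : ∀ S : Finset α, (∑ i ∈ S, z i) ≤ (N.rk S : ℤ) + u)
    (hall : ∀ S ∈ 𝒮, TightSet N u z S) :
    TightSet N u z (𝒮.inf id) := by
  induction h𝒮 using Finset.Nonempty.cons_induction with
  | singleton a => simpa using hall a (by simp)
  | cons a s ha hs ih =>
    rw [Finset.inf_cons]
    have h1 : TightSet N u z a := hall a (Finset.mem_cons_self a s)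
    have h2 : TightSet N u z (s.inf id) := ih fun S hS => hall S (Finset.mem_cons.2 (Or.inr hS))
    exact (tight_union_inter hineq h1 h2).2

lemma tight_sup_of_cover [Nonempty α]
    (hineq : ∀ S : Finset α, (∑ i ∈ S, z i) ≤ (N.rk S : ℤ) + u)
    (hcov : ∀ i : α, ∃ S : Finset α, TightSet N u z S ∧ i ∈ S) :
    TightSet N u z Finset.univ := by
  have key : ∀ I : Finset α, I.Nonempty → ∃ T : Finset α, TightSet N u z T ∧ I ⊆ T := by
    intro I hI
    induction hI using Finset.Nonempty.cons_induction with
    | singleton a =>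
      obtain ⟨S, hS, haS⟩ := hcov a
      exact ⟨S, hS, by simpa using haS⟩
    | cons a s ha hs ih =>
      obtain ⟨T, hT, hsT⟩ := ih
      obtain ⟨S, hS, haS⟩ := hcov a
      refine ⟨S ∪ T, (tight_union_inter hineq hS hT).1, ?_⟩
      intro x hx
      rcases Finset.mem_cons.1 hx with rfl | hx
      · exact Finset.mem_union_left _ haS
      · exact Finset.mem_union_right _ (hsT hx)
  obtain ⟨T, hT, hsub⟩ := key Finset.univ Finset.univ_nonempty
  have : T = Finset.univ := Finset.univ_subset_iff.mp hsub
  rwa [← this]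

end Tight

/-- Base case: an integer point of the base-polytope system is a basis indicator. -/
lemma base_case_indicator (N : PolyMatroid α) (hmat : ∀ i : α, N.rk {i} ≤ 1) (z : α → ℤ)
    (h1 : (∑ i, z i) = (N.rk Finset.univ : ℤ))
    (h2 : ∀ S : Finset α, (∑ i ∈ S, z i) ≤ (N.rk S : ℤ)) :
    ∃ B : Finset α, N.IsBasis B ∧ (fun i => (z i : ℝ)) = indicatorVec B := by
  have hle1 : ∀ i, z i ≤ 1 := by
    intro i
    have := h2 {i}
    have := hmat i
    simp only [Finset.sum_singleton] at *
    omega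
  have hge0 : ∀ i, 0 ≤ z i := by
    intro i
    have hs : (∑ j ∈ Finset.univ.erase i, z j) + z i = ∑ j, z j :=
      Finset.sum_erase_add _ _ (Finset.mem_univ i)
    have h3 := h2 (Finset.univ.erase i)
    have h4 : N.rk (Finset.univ.erase i) ≤ N.rk Finset.univ :=
      N.rk_mono (Finset.erase_subset _ _)
    omega
  set B := Finset.univ.filter (fun i => z i = 1) with hB
  have hzB : ∀ i, z i = if i ∈ B then 1 else 0 := by
    intro i
    have hmem : i ∈ B ↔ z i = 1 := by simp [hB]
    by_cases h : i ∈ B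
    · rw [if_pos h]; exact hmem.1 h
    · rw [if_neg h]
      have hne : z i ≠ 1 := fun hh => h (hmem.2 hh)
      have := hle1 i; have := hge0 i
      omega
  have hsum : ∀ S : Finset α, (∑ i ∈ S, z i) = ((B ∩ S).card : ℤ) := by
    intro S
    rw [Finset.sum_congr rfl fun i _ => hzB i, Finset.sum_boole]
    rw [Finset.filter_mem_eq_inter, Finset.inter_comm]
  have hcard : (B.card : ℤ) = (N.rk Finset.univ : ℤ) := by
    have := hsum Finset.univ
    rw [Finset.inter_univ] at this
    omega
  have hBrk : N.rk B = B.card := by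
    have hub := h2 B
    rw [hsum B, Finset.inter_self] at hub
    have := N.rk_le_card hmat B
    omega
  refine ⟨B, ⟨hBrk, by omega⟩, ?_⟩
  funext i
  rw [hzB i]
  unfold indicatorVec
  split <;> simp

/-- **Hard direction**: an integer point satisfying the inequality system lies in the
Minkowski sum. -/
theorem mem_sum_of_satSys [Nonempty α] (N : PolyMatroid α) (hmat : ∀ i : α, N.rk {i} ≤ 1) :
    ∀ t u : ℕ, ∀ z : α → ℤ, SatSys N t u z →
    (fun i => (z i : ℝ)) ∈
      matroidPolytope N + (u : ℝ) • stdSimplexSet α + (t : ℝ) • (-stdSimplexSet α) := by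
  intro t
  induction t with
  | zero =>
    intro u
    induction u with
    | zero =>
      intro z ⟨h1, h2⟩
      push_cast at h1
      simp only [Nat.cast_zero, add_zero, sub_zero] at h1 h2
      obtain ⟨B, hB, hind⟩ := base_case_indicator N hmat z h1 h2
      rw [Nat.cast_zero, sum_zero_smul, hind]
      exact subset_convexHull ℝ _ ⟨B, hB, rfl⟩
    | succ u ih =>
      intro z ⟨h1, h2⟩
      -- find the minimal tight set
      classical
      set 𝒯 : Finset (Finset α) :=
        Finset.univ.filter (fun S : Finset α => TightSet N (u+1) z S) with h𝒯
      have hUtight : TightSet N (u+1) z Finset.univ := by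
        unfold TightSet
        push_cast at h1 ⊢
        omega
      have hUmem : Finset.univ ∈ 𝒯 :=
        Finset.mem_filter.mpr ⟨Finset.mem_univ _, hUtight⟩
      have h𝒯ne : 𝒯.Nonempty := ⟨_, hUmem⟩
      have hT0 : TightSet N (u+1) z (𝒯.inf id) := by
        apply tight_inf h𝒯ne h2
        intro S hS
        exact (Finset.mem_filter.mp hS).2
      set T0 := 𝒯.inf id with hT0def
      have hT0sub : ∀ S : Finset α, TightSet N (u+1) z S → T0 ⊆ S := by
        intro S hS
        have h : T0 ≤ S := Finset.inf_le (Finset.mem_filter.mpr ⟨Finset.mem_univ _, hS⟩)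
        exact h
      have hexi : ∃ i ∈ T0, 1 ≤ z i := by
        by_contra h
        push_neg at h
        have hle : (∑ i ∈ T0, z i) ≤ 0 := Finset.sum_nonpos (fun i hi => by have := h i hi; omega)
        unfold TightSet at hT0
        have : (0:ℤ) ≤ (N.rk T0 : ℤ) := Int.natCast_nonneg _
        omega
      obtain ⟨i, hiT0, hzi⟩ := hexi
      set z' : α → ℤ := fun j => z j - (if j = i then 1 else 0) with hz'
      have hsum' : ∀ S : Finset α, (∑ j ∈ S, z' j) = (∑ j ∈ S, z j) - (if i ∈ S then 1 else 0) := by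
        intro S
        rw [hz', Finset.sum_sub_distrib]
        congr 1
        exact Finset.sum_ite_eq' S i (fun _ => (1:ℤ))
      have hsys' : SatSys N 0 u z' := by
        constructor
        · rw [hsum', if_pos (Finset.mem_univ i)]
          push_cast at h1 ⊢
          omega
        · intro S
          rw [hsum']
          by_cases htS : TightSet N (u+1) z S
          · have : i ∈ S := hT0sub S htS hiT0
            rw [if_pos this]
            unfold TightSet at htS
            push_cast at htS ⊢
            omega
          · have hne : (∑ j ∈ S, z j) ≠ (N.rk S : ℤ) + (u+1) := htS
            have := h2 S
            push_cast at this hne ⊢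
            split <;> omega
      have hmem' := ih z' hsys'
      have heq : (fun j => (z j : ℝ)) = (fun j => (z' j : ℝ)) + Pi.single i 1 := by
        funext j
        simp only [Pi.add_apply, hz', Pi.single_apply]
        push_cast
        split <;> ring
      rw [heq]
      exact mem_step_u _ _ _ hmem' (single_mem_simplex i)
  | succ t ih =>
    intro u z ⟨h1, h2⟩
    classical
    have hexi : ∃ i : α, ∀ S : Finset α, TightSet N u z S → i ∉ S := by
      by_contra h
      push_neg at h
      have hcov : ∀ i : α, ∃ S : Finset α, TightSet N u z S ∧ i ∈ S := by
        intro i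
        obtain ⟨S, hS1, hS2⟩ := h i
        exact ⟨S, hS1, hS2⟩
      have := tight_sup_of_cover h2 hcov
      unfold TightSet at this
      push_cast at h1 this
      omega
    obtain ⟨i, hi⟩ := hexi
    set z' : α → ℤ := fun j => z j + (if j = i then 1 else 0) with hz'
    have hsum' : ∀ S : Finset α, (∑ j ∈ S, z' j) = (∑ j ∈ S, z j) + (if i ∈ S then 1 else 0) := by
      intro S
      rw [hz', Finset.sum_add_distrib]
      congr 1
      exact Finset.sum_ite_eq' S i (fun _ => (1:ℤ))
    have hsys' : SatSys N t u z' := by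
      constructor
      · rw [hsum', if_pos (Finset.mem_univ i)]
        push_cast at h1 ⊢
        omega
      · intro S
        rw [hsum']
        by_cases hiS : i ∈ S
        · rw [if_pos hiS]
          have hnt : ¬ TightSet N u z S := fun ht => hi S ht hiS
          have hne : (∑ j ∈ S, z j) ≠ (N.rk S : ℤ) + u := hnt
          have := h2 S
          omega
        · rw [if_neg hiS]
          have := h2 S
          omega
    have hmem' := ih u z' hsys'
    have heq : (fun j => (z j : ℝ)) = (fun j => (z' j : ℝ)) + (-(Pi.single i 1)) := by
      funext j
      simp only [Pi.add_apply, Pi.neg_apply, hz', Pi.single_apply]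
      push_cast
      split <;> ring
    rw [heq]
    refine mem_step_t _ _ _ hmem' ?_
    rw [Set.mem_neg, neg_neg]
    exact single_mem_simplex i

end HardDirection
section LatticeChar

variable {α : Type*} [Fintype α] [DecidableEq α]

lemma lattice_mem_iff [Nonempty α] (N : PolyMatroid α) (hmat : ∀ i : α, N.rk {i} ≤ 1)
    (t u : ℕ) (q : α → ℤ) :
    ((fun i => (q i : ℝ)) ∈
      matroidPolytope N + (u : ℝ) • stdSimplexSet α + (t : ℝ) • (-stdSimplexSet α)) ↔
    SatSys N t u q :=
  ⟨satSys_of_mem N hmat t u q, mem_sum_of_satSys N hmat t u q⟩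

lemma Qcount_eq_ncard [Nonempty α] (N : PolyMatroid α) (hmat : ∀ i : α, N.rk {i} ≤ 1)
    (t u : ℕ) :
    Qcount (matroidPolytope N) t u = {q : α → ℤ | SatSys N t u q}.ncard := by
  unfold Qcount latticeCount
  congr 1
  ext q
  exact lattice_mem_iff N hmat t u q

lemma satSys_finite (N : PolyMatroid α) (hmat : ∀ i : α, N.rk {i} ≤ 1) (t u : ℕ) :
    {q : α → ℤ | SatSys N t u q}.Finite := by
  have hsub : {q : α → ℤ | SatSys N t u q} ⊆
      Set.pi Set.univ (fun _ : α => Set.Icc (-(t:ℤ)) (1 + u)) := by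
    intro q ⟨h1, h2⟩
    intro i _
    constructor
    · have hs : (∑ j ∈ Finset.univ.erase i, q j) + q i = ∑ j, q j :=
        Finset.sum_erase_add _ _ (Finset.mem_univ i)
      have h3 := h2 (Finset.univ.erase i)
      have h4 : N.rk (Finset.univ.erase i) ≤ N.rk Finset.univ :=
        N.rk_mono (Finset.erase_subset _ _)
      omega
    · have := h2 {i}
      have := hmat i
      simp only [Finset.sum_singleton] at *
      omega
  exact Set.Finite.subset (Set.Finite.pi fun _ => Set.finite_Icc _ _) hsub

end LatticeChar

section Split

variable {α : Type*} [Fintype α] [DecidableEq α]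
variable {M : PolyMatroid α} {C : Finset α}

/-- The new lattice points contributed by the relaxation. -/
def NewPts (M : PolyMatroid α) (C : Finset α) (t u : ℕ) : Set (α → ℤ) :=
  {q | (∀ i ∈ C, 1 ≤ q i) ∧ (∑ i ∈ C, q i) = (M.rk Finset.univ : ℤ) + u ∧
    (∀ i ∉ C, q i ≤ 0) ∧ (∑ i ∈ Cᶜ, q i) = -(t : ℤ)}

lemma sum_split (q : α → ℤ) (S : Finset α) :
    (∑ i ∈ S, q i) = (∑ i ∈ S ∩ C, q i) + (∑ i ∈ S \ C, q i) :=
  (Finset.sum_inter_add_sum_sdiff S C q).symm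

variable (hmat : ∀ i : α, M.rk {i} ≤ 1) (hcirc : M.IsCircuit C) (hhyp : M.IsHyperplane C)

include hmat hcirc hhyp

lemma satSys_mono (t u : ℕ) (q : α → ℤ)
    (h : SatSys M t u q) : SatSys (relaxMatroid M C hmat hcirc hhyp) t u q := by
  obtain ⟨h1, h2⟩ := h
  constructor
  · show (∑ i, q i) = (relaxRk M C Finset.univ : ℤ) + u - t
    rw [PolyMatroid.relaxRk_univ hhyp]
    exact h1
  · intro S
    have := h2 S
    have hle : (M.rk S : ℤ) ≤ (relaxRk M C S : ℤ) := by
      exact_mod_cast PolyMatroid.relaxRk_le S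
    show (∑ i ∈ S, q i) ≤ (relaxRk M C S : ℤ) + u
    omega

lemma newPts_not_satSys (t u : ℕ) (q : α → ℤ) (hq : q ∈ NewPts M C t u) :
    ¬ SatSys M t u q := by
  rintro ⟨h1, h2⟩
  have h3 := h2 C
  have h4 := hq.2.1
  have h5 := hhyp.1
  omega

lemma newPts_satSys' (t u : ℕ) (q : α → ℤ) (hq : q ∈ NewPts M C t u) :
    SatSys (relaxMatroid M C hmat hcirc hhyp) t u q := by
  obtain ⟨hge, hsC, hle, hsD⟩ := hq
  set r := M.rk Finset.univ with hr
  have hcardC : C.card = r := PolyMatroid.card_C_eq hcirc hhyp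
  constructor
  · show (∑ i, q i) = (relaxRk M C Finset.univ : ℤ) + u - t
    rw [PolyMatroid.relaxRk_univ hhyp]
    have : (∑ i ∈ C, q i) + (∑ i ∈ Cᶜ, q i) = ∑ i, q i :=
      Finset.sum_add_sum_compl C q
    omega
  · intro S
    show (∑ i ∈ S, q i) ≤ (relaxRk M C S : ℤ) + u
    have hsplit := sum_split (C := C) q S
    have hd : (∑ i ∈ S \ C, q i) ≤ 0 :=
      Finset.sum_nonpos fun i hi => hle i (Finset.mem_sdiff.mp hi).2
    -- bound the C-part
    have hCsplit : (∑ i ∈ C ∩ S, q i) + (∑ i ∈ C \ S, q i) = ∑ i ∈ C, q i :=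
      Finset.sum_inter_add_sum_sdiff C S q
    have hCS : ((C \ S).card : ℤ) ≤ ∑ i ∈ C \ S, q i := by
      have := Finset.card_nsmul_le_sum (C \ S) q 1
        (fun i hi => hge i (Finset.mem_sdiff.mp hi).1)
      simpa using this
    have hcards : (C ∩ S).card + (C \ S).card = C.card :=
      Finset.card_inter_add_card_sdiff C S
    have hSC : (∑ i ∈ S ∩ C, q i) ≤ ((C ∩ S).card : ℤ) + u := by
      rw [Finset.inter_comm]
      omega
    by_cases hS : S = C
    · rw [hS, PolyMatroid.relaxRk_C]
      rw [hS] at hsplit hd hSC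
      have : C ∩ C = C := Finset.inter_self C
      rw [this] at hSC
      omega
    · rw [PolyMatroid.relaxRk_ne _ hS]
      have hint : ((C ∩ S).card : ℤ) ≤ (M.rk S : ℤ) := by
        exact_mod_cast PolyMatroid.inter_C_card_le hmat hcirc hhyp hS
      omega

lemma satSys'_split (t u : ℕ) (q : α → ℤ)
    (h : SatSys (relaxMatroid M C hmat hcirc hhyp) t u q) :
    SatSys M t u q ∨ q ∈ NewPts M C t u := by
  obtain ⟨h1, h2⟩ := h
  rw [show (relaxMatroid M C hmat hcirc hhyp).rk Finset.univ = relaxRk M C Finset.univ from rfl,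
    PolyMatroid.relaxRk_univ hhyp] at h1
  set r := M.rk Finset.univ with hr
  have hrkC : M.rk C + 1 = r := hhyp.1
  have h2' : ∀ S : Finset α, S ≠ C → (∑ i ∈ S, q i) ≤ (M.rk S : ℤ) + u := by
    intro S hS
    have := h2 S
    rwa [show (relaxMatroid M C hmat hcirc hhyp).rk S = relaxRk M C S from rfl,
      PolyMatroid.relaxRk_ne _ hS] at this
  have hC' : (∑ i ∈ C, q i) ≤ (r : ℤ) + u := by
    have := h2 C
    rwa [show (relaxMatroid M C hmat hcirc hhyp).rk C = relaxRk M C C from rfl,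
      PolyMatroid.relaxRk_C] at this
  by_cases hCle : (∑ i ∈ C, q i) ≤ (M.rk C : ℤ) + u
  · left
    refine ⟨h1, fun S => ?_⟩
    by_cases hS : S = C
    · rw [hS]; exact hCle
    · exact h2' S hS
  · right
    push_neg at hCle
    have hCeq : (∑ i ∈ C, q i) = (r : ℤ) + u := by omega
    refine ⟨?_, hCeq, ?_, ?_⟩
    · intro i hi
      have hiC : C.erase i ≠ C := by
        intro h
        have := Finset.notMem_erase i C
        rw [h] at this
        exact this hi
      have hsub : M.rk (C.erase i) = (C.erase i).card :=
        hcirc.2 _ (Finset.erase_ssubset hi)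
      have hcard : (C.erase i).card = C.card - 1 := Finset.card_erase_of_mem hi
      have hcardC : C.card = r := PolyMatroid.card_C_eq hcirc hhyp
      have hineq := h2' _ hiC
      rw [hsub] at hineq
      have hs : (∑ j ∈ C.erase i, q j) + q i = ∑ j ∈ C, q j :=
        Finset.sum_erase_add _ _ hi
      have hrpos : 1 ≤ r := by omega
      have : ((C.erase i).card : ℤ) = (r : ℤ) - 1 := by
        rw [hcard, hcardC]
        omega
      omega
    · intro i hi
      have hins : insert i C ≠ C := by
        intro h
        exact hi (h ▸ Finset.mem_insert_self i C)
      have hrk : M.rk (insert i C) = r :=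
        PolyMatroid.rk_superset_C hmat hhyp (Finset.subset_insert i C) hins
      have hineq := h2' _ hins
      rw [hrk] at hineq
      have hs : (∑ j ∈ insert i C, q j) = q i + ∑ j ∈ C, q j :=
        Finset.sum_insert hi
      omega
    · have : (∑ i ∈ C, q i) + (∑ i ∈ Cᶜ, q i) = ∑ i, q i :=
        Finset.sum_add_sum_compl C q
      omega

lemma satSys'_eq_union (t u : ℕ) :
    {q : α → ℤ | SatSys (relaxMatroid M C hmat hcirc hhyp) t u q} =
      {q : α → ℤ | SatSys M t u q} ∪ NewPts M C t u := by
  ext q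
  constructor
  · intro h
    exact satSys'_split hmat hcirc hhyp t u q h
  · rintro (h | h)
    · exact satSys_mono hmat hcirc hhyp t u q h
    · exact newPts_satSys' hmat hcirc hhyp t u q h

lemma count_split [Nonempty α] (t u : ℕ) :
    Qcount (relaxedPolytope M C) t u =
      Qcount (matroidPolytope M) t u + (NewPts M C t u).ncard := by
  have h1 : Qcount (relaxedPolytope M C) t u =
      {q : α → ℤ | SatSys (relaxMatroid M C hmat hcirc hhyp) t u q}.ncard := by
    rw [← relaxMatroid_polytope M C hmat hcirc hhyp]
    exact Qcount_eq_ncard _ (relaxMatroid_single M C hmat hcirc hhyp) t u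
  rw [h1, Qcount_eq_ncard M hmat t u, satSys'_eq_union hmat hcirc hhyp t u]
  have hdisj : Disjoint {q : α → ℤ | SatSys M t u q} (NewPts M C t u) := by
    rw [Set.disjoint_right]
    intro q hq hq'
    exact newPts_not_satSys hmat hcirc hhyp t u q hq hq'
  have hfin1 : {q : α → ℤ | SatSys M t u q}.Finite := satSys_finite M hmat t u
  have hfin2 : (NewPts M C t u).Finite := by
    apply Set.Finite.subset (satSys_finite (relaxMatroid M C hmat hcirc hhyp)
      (relaxMatroid_single M C hmat hcirc hhyp) t u)
    intro q hq
    exact newPts_satSys' hmat hcirc hhyp t u q hq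
  exact Set.ncard_union_eq hdisj hfin1 hfin2

end Split
section StarsBars

variable {α : Type*} [Fintype α] [DecidableEq α]

/-- Functions supported on `s` with sum `k`. -/
def FSet (s : Finset α) (k : ℕ) : Set (α → ℕ) :=
  {f | (∀ i ∉ s, f i = 0) ∧ (∑ i ∈ s, f i) = k}

lemma fset_finite (s : Finset α) (k : ℕ) : (FSet s k).Finite := by
  have hsub : FSet s k ⊆ Set.pi Set.univ (fun _ : α => Set.Iic k) := by
    intro f ⟨h1, h2⟩ i _
    by_cases h : i ∈ s
    · exact h2 ▸ Finset.single_le_sum (fun j _ => Nat.zero_le (f j)) h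
    · simp [h1 i h]
  exact Set.Finite.subset (Set.Finite.pi fun _ => Set.finite_Iic _) hsub

lemma fset_zero (s : Finset α) : FSet s 0 = {fun _ => 0} := by
  ext f
  simp only [FSet, Set.mem_setOf_eq, Set.mem_singleton_iff]
  constructor
  · rintro ⟨h1, h2⟩
    funext i
    by_cases h : i ∈ s
    · exact (Finset.sum_eq_zero_iff.mp h2) i h
    · exact h1 i h
  · rintro rfl
    exact ⟨fun _ _ => rfl, Finset.sum_const_zero⟩

lemma fset_singleton (a : α) (k : ℕ) :
    FSet {a} k = {fun i => if i = a then k else 0} := by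
  ext f
  simp only [FSet, Set.mem_setOf_eq, Set.mem_singleton_iff, Finset.sum_singleton,
    Finset.mem_singleton]
  constructor
  · rintro ⟨h1, h2⟩
    funext i
    by_cases h : i = a
    · rw [if_pos h, h, h2]
    · rw [if_neg h, h1 i h]
  · rintro rfl
    refine ⟨fun i hi => if_neg hi, if_pos rfl⟩

theorem fset_ncard (s : Finset α) (hs : s.Nonempty) (k : ℕ) :
    (FSet s k).ncard = (k + (s.card - 1)).choose (s.card - 1) := by
  induction hs using Finset.Nonempty.cons_induction generalizing k with
  | singleton a =>
    rw [fset_singleton]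
    simp
  | cons a s ha hs ih =>
    induction k with
    | zero =>
      rw [fset_zero]
      simp
    | succ k ihk =>
      -- split on whether f a = 0
      have hcard : (Finset.cons a s ha).card = s.card + 1 := Finset.card_cons ha
      set m := s.card with hm
      have hmpos : 1 ≤ m := Finset.card_pos.2 hs
      have hA0 : {f ∈ FSet (Finset.cons a s ha) (k+1) | f a = 0} = FSet s (k+1) := by
        ext f
        simp only [Set.mem_setOf_eq, FSet, Finset.mem_cons, Finset.sum_cons]
        constructor
        · rintro ⟨⟨h1, h2⟩, h3⟩
          refine ⟨fun i hi => ?_, by omega⟩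
          by_cases h : i = a
          · rw [h]; exact h3
          · exact h1 i (by tauto)
        · rintro ⟨h1, h2⟩
          have hfa : f a = 0 := h1 a ha
          exact ⟨⟨fun i hi => h1 i (by tauto), by omega⟩, hfa⟩
      have hA1 : (fun f : α → ℕ => Function.update f a (f a - 1)) ''
          {f ∈ FSet (Finset.cons a s ha) (k+1) | 1 ≤ f a} = FSet (Finset.cons a s ha) k := by
        ext g
        constructor
        · rintro ⟨f, ⟨⟨h1, h2⟩, h3⟩, rfl⟩
          rw [Finset.sum_cons] at h2
          constructor
          · intro i hi
            have hia : i ≠ a := fun h => hi (h ▸ Finset.mem_cons_self a s)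
            simp only [Function.update_of_ne hia]
            exact h1 i hi
          · simp only [Finset.sum_cons, Function.update_self]
            have heq2 : ∑ i ∈ s, Function.update f a (f a - 1) i = ∑ i ∈ s, f i :=
              Finset.sum_congr rfl fun i hi =>
                Function.update_of_ne (fun h => ha (by rw [← h]; exact hi)) _ _
            rw [heq2]
            omega
        · rintro ⟨h1, h2⟩
          rw [Finset.sum_cons] at h2
          refine ⟨Function.update g a (g a + 1), ⟨⟨?_, ?_⟩, ?_⟩, ?_⟩
          · intro i hi
            have hia : i ≠ a := fun h => hi (h ▸ Finset.mem_cons_self a s)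
            simp only [Function.update_of_ne hia]
            exact h1 i hi
          · simp only [Finset.sum_cons, Function.update_self]
            have heq2 : ∑ i ∈ s, Function.update g a (g a + 1) i = ∑ i ∈ s, g i :=
              Finset.sum_congr rfl fun i hi =>
                Function.update_of_ne (fun h => ha (by rw [← h]; exact hi)) _ _
            rw [heq2]
            omega
          · simp only [Function.update_self]
            omega
          · funext i
            by_cases h : i = a
            · subst h
              simp
            · simp only [Function.update_of_ne h]
      have hinj : Set.InjOn (fun f : α → ℕ => Function.update f a (f a - 1))
          {f ∈ FSet (Finset.cons a s ha) (k+1) | 1 ≤ f a} := by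
        rintro f ⟨_, hf⟩ g ⟨_, hg⟩ heq
        funext i
        by_cases h : i = a
        · subst h
          have h1 := congrFun heq i
          simp only [Function.update_self] at h1
          omega
        · have h1 := congrFun heq i
          simpa only [Function.update_of_ne h] using h1
      have hsplit : FSet (Finset.cons a s ha) (k+1) =
          {f ∈ FSet (Finset.cons a s ha) (k+1) | f a = 0} ∪
          {f ∈ FSet (Finset.cons a s ha) (k+1) | 1 ≤ f a} := by
        ext f
        simp only [Set.mem_union, Set.mem_setOf_eq]
        constructor
        · intro h
          rcases Nat.eq_zero_or_pos (f a) with h0 | h0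
          · exact Or.inl ⟨h, h0⟩
          · exact Or.inr ⟨h, h0⟩
        · rintro (⟨h, _⟩ | ⟨h, _⟩) <;> exact h
      have hd : Disjoint {f ∈ FSet (Finset.cons a s ha) (k+1) | f a = 0}
          {f ∈ FSet (Finset.cons a s ha) (k+1) | 1 ≤ f a} := by
        rw [Set.disjoint_left]
        rintro f ⟨_, h0⟩ ⟨_, h1⟩
        omega
      have hf0 : ({f ∈ FSet (Finset.cons a s ha) (k+1) | f a = 0}).Finite :=
        Set.Finite.subset (fset_finite _ _) (fun f hf => hf.1)
      have hf1 : ({f ∈ FSet (Finset.cons a s ha) (k+1) | 1 ≤ f a}).Finite :=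
        Set.Finite.subset (fset_finite _ _) (fun f hf => hf.1)
      have hcount : (FSet (Finset.cons a s ha) (k+1)).ncard =
          (FSet s (k+1)).ncard + (FSet (Finset.cons a s ha) k).ncard := by
        rw [hsplit, Set.ncard_union_eq hd hf0 hf1, hA0, ← hA1,
          Set.ncard_image_of_injOn hinj]
      rw [hcount, ih, ihk]
      rw [hcard]
      have h1 : s.card + 1 - 1 = m := by omega
      rw [h1]
      -- Pascal: (k+1+m).choose m = (k+1+(m-1)).choose (m-1) + (k+m).choose m
      obtain ⟨m', hm'⟩ : ∃ m', m = m' + 1 := ⟨m - 1, by omega⟩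
      rw [hm']
      have e1 : m' + 1 - 1 = m' := by omega
      rw [e1, show k + 1 + m' = k + m' + 1 by omega,
        show k + (m' + 1) = k + m' + 1 by omega,
        show k + 1 + (m' + 1) = (k + m' + 1) + 1 by omega,
        Nat.choose_succ_succ (k + m' + 1) m']

end StarsBars
section CountNew

variable {α : Type*} [Fintype α] [DecidableEq α]
variable {M : PolyMatroid α} {C : Finset α}

/-- The bijection between the new lattice points and pairs of nonnegative vectors. -/
noncomputable def newPtsEquiv (M : PolyMatroid α) (C : Finset α) (t u : ℕ)
    (hcard : (C.card : ℤ) = (M.rk Finset.univ : ℤ)) :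
    NewPts M C t u ≃ (FSet C u) × (FSet Cᶜ t) where
  toFun q :=
    ⟨⟨fun i => if i ∈ C then (q.1 i - 1).toNat else 0, by
      obtain ⟨hge, hsC, hle, hsD⟩ := q.2
      refine ⟨fun i hi => by simp only [if_neg hi], ?_⟩
      show (∑ i ∈ C, if i ∈ C then (q.1 i - 1).toNat else 0) = u
      rw [Finset.sum_congr rfl (fun i hi => if_pos hi)]
      have h2 : ((∑ i ∈ C, (q.1 i - 1).toNat : ℕ) : ℤ) = (u : ℤ) := by
        rw [Nat.cast_sum,
          Finset.sum_congr rfl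
            (fun i hi => Int.toNat_of_nonneg (by have := hge i hi; omega)),
          Finset.sum_sub_distrib]
        simp only [Finset.sum_const, nsmul_eq_mul, mul_one]
        omega
      exact_mod_cast h2⟩,
    ⟨fun i => if i ∈ C then 0 else (-q.1 i).toNat, by
      obtain ⟨hge, hsC, hle, hsD⟩ := q.2
      refine ⟨fun i hi => by
        rw [Finset.mem_compl, not_not] at hi
        simp only [if_pos hi], ?_⟩
      show (∑ i ∈ Cᶜ, if i ∈ C then 0 else (-q.1 i).toNat) = t
      rw [Finset.sum_congr rfl (fun i hi => if_neg (Finset.mem_compl.mp hi))]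
      have h2 : ((∑ i ∈ Cᶜ, (-q.1 i).toNat : ℕ) : ℤ) = (t : ℤ) := by
        rw [Nat.cast_sum,
          Finset.sum_congr rfl
            (fun i hi => Int.toNat_of_nonneg
              (by have := hle i (Finset.mem_compl.mp hi); omega)),
          Finset.sum_neg_distrib]
        omega
      exact_mod_cast h2⟩⟩
  invFun fg :=
    ⟨fun i => if i ∈ C then (fg.1.1 i : ℤ) + 1 else -(fg.2.1 i : ℤ), by
      obtain ⟨hf0, hfs⟩ := fg.1.2
      obtain ⟨hg0, hgs⟩ := fg.2.2
      refine ⟨?_, ?_, ?_, ?_⟩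
      · intro i hi
        simp only [if_pos hi]
        omega
      · show (∑ i ∈ C, if i ∈ C then (fg.1.1 i : ℤ) + 1 else -(fg.2.1 i : ℤ))
          = (M.rk Finset.univ : ℤ) + u
        rw [Finset.sum_congr rfl (fun i hi => if_pos hi), Finset.sum_add_distrib]
        simp only [Finset.sum_const, nsmul_eq_mul, mul_one]
        rw [← Nat.cast_sum, hfs]
        omega
      · intro i hi
        simp only [if_neg hi]
        omega
      · show (∑ i ∈ Cᶜ, if i ∈ C then (fg.1.1 i : ℤ) + 1 else -(fg.2.1 i : ℤ)) = -(t : ℤ)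
        rw [Finset.sum_congr rfl (fun i hi => if_neg (Finset.mem_compl.mp hi)),
          Finset.sum_neg_distrib, ← Nat.cast_sum, hgs]⟩
  left_inv q := by
    apply Subtype.ext
    funext i
    obtain ⟨hge, hsC, hle, hsD⟩ := q.2
    by_cases h : i ∈ C
    · simp only [if_pos h]
      rw [Int.toNat_of_nonneg (by have := hge i h; omega)]
      omega
    · simp only [if_neg h]
      rw [Int.toNat_of_nonneg (by have := hle i h; omega)]
      omega
  right_inv fg := by
    obtain ⟨⟨f, hf⟩, ⟨g, hg⟩⟩ := fg
    apply Prod.ext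
    · apply Subtype.ext
      funext i
      by_cases h : i ∈ C
      · simp only [if_pos h]
        omega
      · simp only [if_neg h]
        exact (hf.1 i h).symm
    · apply Subtype.ext
      funext i
      by_cases h : i ∈ C
      · simp only [if_pos h]
        exact (hg.1 i (by simp [h])).symm
      · simp only [if_neg h]
        omega

lemma newPts_ncard (t u : ℕ) (hmat : ∀ i : α, M.rk {i} ≤ 1) (hcirc : M.IsCircuit C)
    (hhyp : M.IsHyperplane C) (hCc : (Cᶜ : Finset α).Nonempty) :
    (NewPts M C t u).ncard =
      (t + ((Cᶜ : Finset α).card - 1)).choose ((Cᶜ : Finset α).card - 1) *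
      (u + (C.card - 1)).choose (C.card - 1) := by
  have hcard : (C.card : ℤ) = (M.rk Finset.univ : ℤ) := by
    exact_mod_cast PolyMatroid.card_C_eq hcirc hhyp
  have h1 : (NewPts M C t u).ncard = Nat.card (NewPts M C t u) :=
    (Nat.card_coe_set_eq _).symm
  rw [h1, Nat.card_congr (newPtsEquiv M C t u hcard), Nat.card_prod,
    Nat.card_coe_set_eq, Nat.card_coe_set_eq,
    fset_ncard C (PolyMatroid.C_nonempty hcirc) u, fset_ncard Cᶜ hCc t]
  ring

end CountNew
section Datum

lemma vandermonde_diag (a t : ℕ) :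
    (∑ i ∈ Finset.range (a+1), (t.choose i) * (a.choose i)) = (t + a).choose a := by
  rw [Nat.add_choose_eq t a a, Finset.Nat.sum_antidiagonal_eq_sum_range_succ_mk]
  apply Finset.sum_congr rfl
  intro k hk
  rw [Finset.mem_range] at hk
  rw [Nat.choose_symm (by omega : k ≤ a)]

/-- Uniqueness of binomial-basis representations. -/
lemma datum_zero' (T : Finset (ℕ × ℕ)) (d : ℕ × ℕ → ℤ) (hsupp : ∀ p ∉ T, d p = 0)
    (hz : ∀ t u : ℕ, (∑ p ∈ T, d p * (t.choose p.1 : ℤ) * (u.choose p.2 : ℤ)) = 0) :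
    ∀ p, d p = 0 := by
  have key : ∀ n : ℕ, ∀ p : ℕ × ℕ, p.1 + p.2 = n → d p = 0 := by
    intro n
    induction n using Nat.strong_induction_on with
    | _ n ih =>
      rintro ⟨t, u⟩ hn
      simp only at hn
      by_cases hpT : (t, u) ∈ T
      swap
      · exact hsupp _ hpT
      have hz' := hz t u
      have hzero : ∀ p ∈ T, p ≠ (t, u) →
          d p * (t.choose p.1 : ℤ) * (u.choose p.2 : ℤ) = 0 := by
        rintro ⟨i, j⟩ hpT2 hne
        simp only
        by_cases hit : i ≤ t
        · by_cases hju : j ≤ u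
          · have hne2 : i ≠ t ∨ j ≠ u := by
              by_contra h
              push_neg at h
              exact hne (by rw [h.1, h.2])
            have hlt : i + j < n := by omega
            rw [ih (i + j) (by omega) (i, j) rfl, zero_mul, zero_mul]
          · rw [Nat.choose_eq_zero_of_lt (by omega : u < j)]
            push_cast
            ring
        · rw [Nat.choose_eq_zero_of_lt (by omega : t < i)]
          push_cast
          ring
      rw [Finset.sum_eq_single (t, u) hzero (fun h => absurd hpT h)] at hz'
      simp only [Nat.choose_self, Nat.cast_one, mul_one] at hz'
      exact hz'
  intro p
  exact key (p.1 + p.2) p rfl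

/-- The explicit datum of the monomial correction term. -/
def Edat (a b : ℕ) : ℕ × ℕ → ℤ := fun p => ((a.choose p.1) * (b.choose p.2) : ℤ)

lemma Edat_zero_outside (a b : ℕ) (p : ℕ × ℕ)
    (hp : p ∉ (Finset.range (a+1)) ×ˢ (Finset.range (b+1))) : Edat a b p = 0 := by
  rw [Finset.mem_product, Finset.mem_range, Finset.mem_range] at hp
  push_neg at hp
  unfold Edat
  by_cases h1 : a + 1 ≤ p.1
  · rw [Nat.choose_eq_zero_of_lt (by omega : a < p.1)]
    push_cast; ring
  · rw [Nat.choose_eq_zero_of_lt (by omega : b < p.2)]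
    push_cast; ring

lemma sum_Edat (a b t u : ℕ) (T : Finset (ℕ × ℕ))
    (hbox : (Finset.range (a+1)) ×ˢ (Finset.range (b+1)) ⊆ T) :
    (∑ p ∈ T, Edat a b p * (t.choose p.1 : ℤ) * (u.choose p.2 : ℤ)) =
      ((t + a).choose a : ℤ) * ((u + b).choose b : ℤ) := by
  rw [← Finset.sum_subset hbox (fun p _ hp => by
    rw [Edat_zero_outside a b p hp, zero_mul, zero_mul])]
  rw [Finset.sum_product]
  have hfact : ∀ i ∈ Finset.range (a+1), ∀ j ∈ Finset.range (b+1),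
      Edat a b (i, j) * (t.choose i : ℤ) * (u.choose j : ℤ) =
        ((t.choose i : ℤ) * (a.choose i : ℤ)) * ((u.choose j : ℤ) * (b.choose j : ℤ)) := by
    intro i _ j _
    unfold Edat
    push_cast
    ring
  rw [Finset.sum_congr rfl (fun i hi => Finset.sum_congr rfl (fun j hj => hfact i hi j hj))]
  rw [← Finset.sum_mul_sum]
  have h1 : (∑ i ∈ Finset.range (a+1), (t.choose i : ℤ) * (a.choose i : ℤ)) =
      ((t + a).choose a : ℤ) := by
    have := vandermonde_diag a t
    exact_mod_cast congrArg (Nat.cast : ℕ → ℤ) this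
  have h2 : (∑ j ∈ Finset.range (b+1), (u.choose j : ℤ) * (b.choose j : ℤ)) =
      ((u + b).choose b : ℤ) := by
    have := vandermonde_diag b u
    exact_mod_cast congrArg (Nat.cast : ℕ → ℤ) this
  rw [h1, h2]

end Datum
section Poly

lemma finsum_datum_eq (d : ℕ × ℕ → ℤ) (T : Finset (ℕ × ℕ)) (hT : ∀ p ∉ T, d p = 0)
    (t u : ℕ) :
    (∑ᶠ p : ℕ × ℕ, d p * (t.choose p.1 : ℤ) * (u.choose p.2 : ℤ)) =
      ∑ p ∈ T, d p * (t.choose p.1 : ℤ) * (u.choose p.2 : ℤ) := by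
  apply finsum_eq_sum_of_support_subset
  intro p hp
  simp only [Function.mem_support] at hp
  by_contra hpT
  rw [Finset.mem_coe] at hpT
  exact hp (by rw [hT p hpT, zero_mul, zero_mul])

lemma QprimePoly_eq_sum (d : ℕ × ℕ → ℤ) (T : Finset (ℕ × ℕ)) (hT : ∀ p ∉ T, d p = 0) :
    QprimePoly d = ∑ p ∈ T,
      MvPolynomial.C (d p) * (MvPolynomial.X 0 - 1) ^ p.1 * (MvPolynomial.X 1 - 1) ^ p.2 := by
  apply finsum_eq_sum_of_support_subset
  intro p hp
  simp only [Function.mem_support] at hp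
  by_contra hpT
  rw [Finset.mem_coe] at hpT
  exact hp (by rw [hT p hpT, map_zero, zero_mul, zero_mul])

lemma sum_Edat_poly (a b : ℕ) (T : Finset (ℕ × ℕ))
    (hbox : (Finset.range (a+1)) ×ˢ (Finset.range (b+1)) ⊆ T) :
    (∑ p ∈ T,
      MvPolynomial.C (Edat a b p) * (MvPolynomial.X 0 - 1) ^ p.1 *
        (MvPolynomial.X 1 - 1) ^ p.2) =
      (MvPolynomial.X 0 : MvPolynomial (Fin 2) ℤ) ^ a * MvPolynomial.X 1 ^ b := by
  rw [← Finset.sum_subset hbox (fun p _ hp => by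
    rw [Edat_zero_outside a b p hp, map_zero, zero_mul, zero_mul])]
  rw [Finset.sum_product]
  have hX0 : (MvPolynomial.X 0 : MvPolynomial (Fin 2) ℤ) ^ a =
      ∑ i ∈ Finset.range (a+1),
        (MvPolynomial.X 0 - 1) ^ i * MvPolynomial.C ((a.choose i : ℤ)) := by
    conv_lhs => rw [show (MvPolynomial.X 0 : MvPolynomial (Fin 2) ℤ) =
      (MvPolynomial.X 0 - 1) + 1 by ring]
    rw [add_pow]
    apply Finset.sum_congr rfl
    intro i _
    rw [one_pow, mul_one, map_natCast (MvPolynomial.C : ℤ →+* MvPolynomial (Fin 2) ℤ)]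
  have hX1 : (MvPolynomial.X 1 : MvPolynomial (Fin 2) ℤ) ^ b =
      ∑ j ∈ Finset.range (b+1),
        (MvPolynomial.X 1 - 1) ^ j * MvPolynomial.C ((b.choose j : ℤ)) := by
    conv_lhs => rw [show (MvPolynomial.X 1 : MvPolynomial (Fin 2) ℤ) =
      (MvPolynomial.X 1 - 1) + 1 by ring]
    rw [add_pow]
    apply Finset.sum_congr rfl
    intro j _
    rw [one_pow, mul_one, map_natCast (MvPolynomial.C : ℤ →+* MvPolynomial (Fin 2) ℤ)]
  rw [hX0, hX1, Finset.sum_mul_sum]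
  apply Finset.sum_congr rfl
  intro i _
  apply Finset.sum_congr rfl
  intro j _
  unfold Edat
  rw [map_mul]
  ring

end Poly
/-- If `M'` is the relaxation of a circuit-hyperplane `C` of `M`, then
`Q'_M(x,y) = Q'_{M'}(x,y) − x^{n−r(M)−1} y^{r(M)−1}`. -/
theorem stmt_12 {α : Type*} [Fintype α] [DecidableEq α] [Nonempty α]
    (M : PolyMatroid α) (hmat : ∀ i : α, M.rk {i} ≤ 1)
    (C : Finset α) (hC : M.IsCircuit C ∧ M.IsHyperplane C)
    (c c' : ℕ × ℕ → ℤ)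
    (hc : IsQdatum (matroidPolytope M) c)
    (hc' : IsQdatum (relaxedPolytope M C) c') :
    QprimePoly c =
      QprimePoly c' -
        MvPolynomial.X 0 ^ (Fintype.card α - M.rk Finset.univ - 1) *
          MvPolynomial.X 1 ^ (M.rk Finset.univ - 1) := by
  obtain ⟨hcirc, hhyp⟩ := hC
  obtain ⟨hcfin, hceq⟩ := hc
  obtain ⟨hc'fin, hc'eq⟩ := hc'
  set n := Fintype.card α with hn
  set r := M.rk Finset.univ with hr
  set a := n - r - 1 with ha
  set b := r - 1 with hb
  have hcardC : C.card = r := PolyMatroid.card_C_eq hcirc hhyp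
  have hrpos : 1 ≤ r := by have := hhyp.1; omega
  have hlt : r < n := by
    have hss : C ⊂ Finset.univ := Finset.ssubset_univ_iff.mpr (PolyMatroid.C_ne_univ hhyp)
    have h2 := Finset.card_lt_card hss
    rw [hcardC, Finset.card_univ] at h2
    exact h2
  have hCc_card : (Cᶜ : Finset α).card = n - r := by
    rw [Finset.card_compl, hcardC]
  have hCc_ne : (Cᶜ : Finset α).Nonempty := by
    rw [← Finset.card_pos, hCc_card]
    omega
  have haC : (Cᶜ : Finset α).card - 1 = a := by omega
  have hbC : C.card - 1 = b := by omega
  have hcount : ∀ t u : ℕ, Qcount (relaxedPolytope M C) t u =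
      Qcount (matroidPolytope M) t u + (t + a).choose a * (u + b).choose b := by
    intro t u
    rw [count_split hmat hcirc hhyp t u, newPts_ncard t u hmat hcirc hhyp hCc_ne, haC, hbC]
  set T := (hcfin.toFinset ∪ hc'fin.toFinset) ∪
    (Finset.range (a+1)) ×ˢ (Finset.range (b+1)) with hT
  have hTc : ∀ p ∉ T, c p = 0 := by
    intro p hp
    by_contra h
    exact hp (Finset.mem_union_left _ (Finset.mem_union_left _ (hcfin.mem_toFinset.mpr h)))
  have hTc' : ∀ p ∉ T, c' p = 0 := by
    intro p hp
    by_contra h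
    exact hp (Finset.mem_union_left _ (Finset.mem_union_right _ (hc'fin.mem_toFinset.mpr h)))
  have hbox : (Finset.range (a+1)) ×ˢ (Finset.range (b+1)) ⊆ T :=
    Finset.subset_union_right
  have hkey : ∀ p, c' p - c p - Edat a b p = 0 := by
    refine datum_zero' T _ ?_ ?_
    · intro p hp
      rw [hTc p hp, hTc' p hp, Edat_zero_outside a b p (fun hin => hp (hbox hin))]
      ring
    · intro t u
      have e1 : (∑ p ∈ T, (c' p - c p - Edat a b p) * (t.choose p.1 : ℤ) * (u.choose p.2 : ℤ))
          = (∑ p ∈ T, c' p * (t.choose p.1 : ℤ) * (u.choose p.2 : ℤ))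
            - (∑ p ∈ T, c p * (t.choose p.1 : ℤ) * (u.choose p.2 : ℤ))
            - (∑ p ∈ T, Edat a b p * (t.choose p.1 : ℤ) * (u.choose p.2 : ℤ)) := by
        rw [← Finset.sum_sub_distrib, ← Finset.sum_sub_distrib]
        apply Finset.sum_congr rfl
        intro p _
        ring
      rw [e1, ← finsum_datum_eq c' T hTc' t u, ← finsum_datum_eq c T hTc t u,
        ← hc'eq t u, ← hceq t u, sum_Edat a b t u T hbox, hcount t u]
      push_cast
      ring
  have hc'eq2 : ∀ p, c' p = c p + Edat a b p := by
    intro p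
    have := hkey p
    omega
  have hpoly : QprimePoly c' = QprimePoly c +
      MvPolynomial.X 0 ^ a * MvPolynomial.X 1 ^ b := by
    rw [QprimePoly_eq_sum c' T hTc', QprimePoly_eq_sum c T hTc, ← sum_Edat_poly a b T hbox,
      ← Finset.sum_add_distrib]
    apply Finset.sum_congr rfl
    intro p _
    rw [hc'eq2 p, map_add]
    ring
  rw [hpoly]
  ring

end
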